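/- arXiv:2110.14857 — 8 statements merged into one kernel-verified Lean document; each statement's English description precedes it below -/
import Mathlib

section
/- Let g be a pre-Lie algebra over K and λ : g → Der(A) a K-linear map satisfying λ(x·y − y·x) = [λ(x),λ(y)]. Then E = A ⊗ g with product (a⊗x)·(b⊗y) = ab ⊗ x·_g y + a λ(x)(b) ⊗ y and anchor θ(a⊗x)(b) = a λ(x)(b) is a pre-Lie-Rinehart algebra over A. -/
/-!
Both sides of every axiom are `K`-multilinear in the elements of `A ⊗ g` involved, so it
suffices to check them on pure tensors. There the pre-Lie identity reduces to the symmetry of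
the associator of `g` together with the symmetry of `λ_x λ_y − λ_{x·y}` in `x, y`, which is the
hypothesis on `λ` evaluated at a point; the anchor condition reduces to the same fact.
-/

/-- A pre-Lie-Rinehart algebra structure over the commutative `K`-algebra `A`:
an `A`-module `E` with a `K`-bilinear pre-Lie product `mul` and an `A`-linear
anchor `θ : E → Der(A)` satisfying the compatibility conditions. -/
def IsPreLieRinehart (K : Type*) {A E : Type*} [Field K] [CommRing A] [Algebra K A]
    [AddCommGroup E] [Module K E] [Module A E] [IsScalarTower K A E]
    (mul : E → E → E) (θ : E → Derivation K A A) : Prop :=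
  (∀ X Y Z : E, mul (X + Y) Z = mul X Z + mul Y Z) ∧
  (∀ X Y Z : E, mul X (Y + Z) = mul X Y + mul X Z) ∧
  (∀ (k : K) (X Y : E), mul (k • X) Y = k • mul X Y) ∧
  (∀ (k : K) (X Y : E), mul X (k • Y) = k • mul X Y) ∧
  (∀ X Y Z : E, mul X (mul Y Z) - mul (mul X Y) Z
      = mul Y (mul X Z) - mul (mul Y X) Z) ∧
  (∀ (a : A) (X Y : E), mul X (a • Y) = a • mul X Y + θ X a • Y) ∧
  (∀ (a : A) (X Y : E), mul (a • X) Y = a • mul X Y) ∧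
  (∀ X Y : E, θ (X + Y) = θ X + θ Y) ∧
  (∀ (a : A) (X : E), θ (a • X) = a • θ X) ∧
  (∀ X Y : E, θ (mul X Y - mul Y X) = ⁅θ X, θ Y⁆)

/-- A Lie-Rinehart algebra structure over the commutative `K`-algebra `A`:
an `A`-module `E` with a `K`-bilinear Lie bracket `br` and an `A`-linear anchor
`θ : E → Der(A)` satisfying the Leibniz and anchor conditions. -/
def IsLieRinehart (K : Type*) {A E : Type*} [Field K] [CommRing A] [Algebra K A]
    [AddCommGroup E] [Module K E] [Module A E] [IsScalarTower K A E]
    (br : E → E → E) (θ : E → Derivation K A A) : Prop :=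
  (∀ X Y Z : E, br (X + Y) Z = br X Z + br Y Z) ∧
  (∀ X Y Z : E, br X (Y + Z) = br X Y + br X Z) ∧
  (∀ (k : K) (X Y : E), br (k • X) Y = k • br X Y) ∧
  (∀ (k : K) (X Y : E), br X (k • Y) = k • br X Y) ∧
  (∀ X : E, br X X = 0) ∧
  (∀ X Y Z : E, br X (br Y Z) + br Y (br Z X) + br Z (br X Y) = 0) ∧
  (∀ (a : A) (X Y : E), br X (a • Y) = a • br X Y + θ X a • Y) ∧
  (∀ X Y : E, θ (X + Y) = θ X + θ Y) ∧
  (∀ (a : A) (X : E), θ (a • X) = a • θ X) ∧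
  (∀ X Y : E, θ (br X Y) = ⁅θ X, θ Y⁆)

open scoped TensorProduct

open TensorProduct

-- The sign is opposite to Mathlib's `associator` for rings, matching the pre-Lie axiom above.
def LinearMap.associator {R M : Type*} [CommRing R] [AddCommGroup M] [Module R M]
    (P : M →ₗ[R] M →ₗ[R] M) : M →ₗ[R] M →ₗ[R] M →ₗ[R] M :=
  (LinearMap.llcomp R M M M).compl₁₂ P P - P.compr₂ P

theorem LinearMap.associator_apply {R M : Type*} [CommRing R] [AddCommGroup M] [Module R M]
    (P : M →ₗ[R] M →ₗ[R] M) (X Y Z : M) :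
    P.associator X Y Z = P X (P Y Z) - P (P X Y) Z :=
  rfl

section Transformation

variable {K A g : Type*} [CommRing K] [CommRing A] [Algebra K A] [AddCommGroup g] [Module K g]

abbrev IsTransformationProduct (mul : g →ₗ[K] g →ₗ[K] g) (lam : g →ₗ[K] Derivation K A A)
    (P : (A ⊗[K] g) →ₗ[K] (A ⊗[K] g) →ₗ[K] (A ⊗[K] g)) : Prop :=
  ∀ (a b : A) (x y : g), P (a ⊗ₜ x) (b ⊗ₜ y) = (a * b) ⊗ₜ mul x y + (a * lam x b) ⊗ₜ y

abbrev IsTransformationAnchor (lam : g →ₗ[K] Derivation K A A)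
    (θ : (A ⊗[K] g) →ₗ[A] Derivation K A A) : Prop :=
  ∀ (a : A) (x : g) (b : A), θ (a ⊗ₜ x) b = a * lam x b

variable {mul : g →ₗ[K] g →ₗ[K] g} {lam : g →ₗ[K] Derivation K A A}
  {P : (A ⊗[K] g) →ₗ[K] (A ⊗[K] g) →ₗ[K] (A ⊗[K] g)} {θ : (A ⊗[K] g) →ₗ[A] Derivation K A A}

theorem lam_comp_sub_lam_mul_symm (hlam : ∀ x y : g, lam (mul x y - mul y x) = ⁅lam x, lam y⁆)
    (x y : g) (c : A) :
    lam x (lam y c) - lam (mul x y) c = lam y (lam x c) - lam (mul y x) c := by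
  have hc := congr($(hlam x y) c)
  simp only [map_sub, Derivation.sub_apply, Derivation.commutator_apply] at hc
  linear_combination -hc

theorem IsTransformationProduct.smul_left (hP : IsTransformationProduct mul lam P) (a : A)
    (X Y : A ⊗[K] g) : P (a • X) Y = a • P X Y := by
  induction X using TensorProduct.induction_on with
  | zero => simp
  | add X X' hX hX' => simp only [smul_add, map_add, LinearMap.add_apply, hX, hX']
  | tmul b x =>
    induction Y using TensorProduct.induction_on with
    | zero => simp
    | add Y Y' hY hY' => simp only [map_add, smul_add, hY, hY']
    | tmul c y => simp only [smul_tmul', smul_eq_mul, hP, smul_add, mul_assoc]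

theorem IsTransformationProduct.smul_right (hP : IsTransformationProduct mul lam P)
    (hθ : IsTransformationAnchor lam θ) (a : A) (X Y : A ⊗[K] g) :
    P X (a • Y) = a • P X Y + θ X a • Y := by
  induction X using TensorProduct.induction_on with
  | zero => simp
  | add X X' hX hX' =>
    simp only [map_add, LinearMap.add_apply, Derivation.add_apply, add_smul, smul_add, hX, hX']
    abel
  | tmul b x =>
    induction Y using TensorProduct.induction_on with
    | zero => simp
    | add Y Y' hY hY' => simp only [map_add, smul_add, hY, hY']; abel
    | tmul c y =>
      simp only [smul_tmul', smul_eq_mul, hP, hθ, smul_add, Derivation.leibniz, mul_add, add_tmul]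
      ring_nf
      abel

theorem IsTransformationProduct.associator_tmul (hP : IsTransformationProduct mul lam P)
    (a b c : A) (x y z : g) :
    P.associator (a ⊗ₜ x) (b ⊗ₜ y) (c ⊗ₜ z) =
      (a * b * c) ⊗ₜ mul.associator x y z + (a * b * lam x c) ⊗ₜ mul y z
        + (a * b * lam y c) ⊗ₜ mul x z
        + (a * b * (lam x (lam y c) - lam (mul x y) c)) ⊗ₜ z := by
  simp only [LinearMap.associator_apply, hP, map_add, LinearMap.add_apply, Derivation.leibniz,
    smul_eq_mul, tmul_sub, mul_sub, sub_tmul, mul_add, add_tmul]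
  ring_nf
  abel

theorem IsTransformationProduct.associator_symm (hP : IsTransformationProduct mul lam P)
    (hpre : ∀ x y z : g, mul.associator x y z = mul.associator y x z)
    (hlam : ∀ x y : g, lam (mul x y - mul y x) = ⁅lam x, lam y⁆) (X Y Z : A ⊗[K] g) :
    P.associator X Y Z = P.associator Y X Z := by
  suffices P.associator = P.associator.flip from congr($this X Y Z)
  refine ext' fun a x => ext' fun b y => ext' fun c z => ?_
  rw [LinearMap.flip_apply, hP.associator_tmul, hP.associator_tmul, hpre x y z,
    lam_comp_sub_lam_mul_symm hlam x y c, mul_comm b a]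
  abel

theorem IsTransformationAnchor.map_commutator (hθ : IsTransformationAnchor lam θ)
    (hP : IsTransformationProduct mul lam P)
    (hlam : ∀ x y : g, lam (mul x y - mul y x) = ⁅lam x, lam y⁆) (X Y : A ⊗[K] g) :
    θ (P X Y - P Y X) = ⁅θ X, θ Y⁆ := by
  induction X using TensorProduct.induction_on with
  | zero => simp
  | add X X' hX hX' =>
    rw [map_add θ, add_lie, ← hX, ← hX', ← map_add]
    congr 1
    simp only [map_add, LinearMap.add_apply]
    abel
  | tmul a x =>
    induction Y using TensorProduct.induction_on with
    | zero => simp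
    | add Y Y' hY hY' =>
      rw [map_add θ, lie_add, ← hY, ← hY', ← map_add]
      congr 1
      simp only [map_add, LinearMap.add_apply]
      abel
    | tmul b y =>
      ext c
      simp only [map_sub, Derivation.sub_apply, Derivation.commutator_apply, hP, map_add,
        Derivation.add_apply, hθ, Derivation.leibniz, smul_eq_mul]
      linear_combination -(a * b) * lam_comp_sub_lam_mul_symm hlam x y c

end Transformation

/-- the transformation pre-Lie-Rinehart algebra. If a pre-Lie
`K`-algebra `g` acts on `A` via `lam : g → Der(A)` with
`lam (x·y − y·x) = [lam x, lam y]`, then `A ⊗ g` with the product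
`(a⊗x)·(b⊗y) = ab ⊗ x·y + a lam(x)(b) ⊗ y` and anchor `θ(a⊗x)(b) = a lam(x)(b)`
is a pre-Lie-Rinehart algebra over `A`. -/
theorem transformation_isPreLieRinehart {K A g : Type*} [Field K] [CommRing A]
    [Algebra K A] [AddCommGroup g] [Module K g]
    (mul : g →ₗ[K] g →ₗ[K] g)
    (hpre : ∀ x y z : g, mul x (mul y z) - mul (mul x y) z
      = mul y (mul x z) - mul (mul y x) z)
    (lam : g →ₗ[K] Derivation K A A)
    (hlam : ∀ x y : g, lam (mul x y - mul y x) = ⁅lam x, lam y⁆)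
    (P : (A ⊗[K] g) →ₗ[K] (A ⊗[K] g) →ₗ[K] (A ⊗[K] g))
    (θ : (A ⊗[K] g) →ₗ[A] Derivation K A A)
    (hP : ∀ (a b : A) (x y : g),
      P (a ⊗ₜ[K] x) (b ⊗ₜ[K] y)
        = (a * b) ⊗ₜ[K] mul x y + (a * lam x b) ⊗ₜ[K] y)
    (hθ : ∀ (a : A) (x : g) (b : A), θ (a ⊗ₜ[K] x) b = a * lam x b) :
    IsPreLieRinehart K (fun X Y => P X Y) (fun X => θ X) :=
  ⟨P.map_add₂, fun X => (P X).map_add, P.map_smul₂, fun k X Y => (P X).map_smul k Y,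
    IsTransformationProduct.associator_symm hP hpre hlam,
    IsTransformationProduct.smul_right hP hθ, IsTransformationProduct.smul_left hP,
    θ.map_add, θ.map_smul, IsTransformationAnchor.map_commutator hθ hP hlam⟩
end

section
/- Let (E, ·_E) be a pre-Lie algebra over a commutative K-algebra A (with A-bilinear product) and (D, δ) a derivation of E, i.e., D : E → E K-linear, δ ∈ Der(A), D(X·_E Y) = D(X)·_E Y + X·_E D(Y), and D(aX) = δ(a)X + a D(X). Then A ⊕ E is a pre-Lie-Rinehart algebra over A with product (a,X)∗(b,Y) = (a δ(b), X·_E Y + a D(Y)) and anchor θ(a,X) = a δ. -/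
/-!
The associator of `⋆` at `(a, X), (b, Y), (c, Z)` is computed explicitly: besides the associator of `E`, whose symmetry
is the pre-Lie identity of `E`, it consists of the terms `a b δ²(c)`,
`b X·D(Z) + a Y·D(Z)` and `a b D²(Z)`, all symmetric in `(a, X)` and `(b, Y)`; the cross
terms cancel because `D` is a derivation of the product and `δ` is the symbol of `D`.
The anchor condition is the bracket `⁅a δ, b δ⁆ = (a δ(b) − b δ(a)) δ` of multiples
of one derivation.
-/

theorem Derivation.lie_smul_smul {R A : Type*} [CommRing R] [CommRing A] [Algebra R A]
    (a b : A) (D₁ D₂ : Derivation R A A) :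
    ⁅a • D₁, b • D₂⁆ = (a * b) • ⁅D₁, D₂⁆ + (a * D₁ b) • D₂ - (b * D₂ a) • D₁ := by
  ext c
  simp only [Derivation.commutator_apply, Derivation.smul_apply, Derivation.add_apply,
    Derivation.sub_apply, smul_eq_mul, Derivation.leibniz]
  ring

theorem Derivation.lie_smul_smul_self {R A : Type*} [CommRing R] [CommRing A] [Algebra R A]
    (a b : A) (D : Derivation R A A) : ⁅a • D, b • D⁆ = (a * D b - b * D a) • D := by
  rw [Derivation.lie_smul_smul, lie_self, smul_zero, zero_add, sub_smul]

section DerivationExtension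

variable {K A E : Type*} [CommRing K] [CommRing A] [Algebra K A] [AddCommGroup E] [Module K E]
  [Module A E]

def derivationExtensionMul (mul : E →ₗ[A] E →ₗ[A] E) (D : E →ₗ[K] E) (δ : Derivation K A A)
    (p q : A × E) : A × E :=
  (p.1 * δ q.1, mul p.2 q.2 + p.1 • D q.2)

variable (mul : E →ₗ[A] E →ₗ[A] E) (D : E →ₗ[K] E) (δ : Derivation K A A)

local notation:70 x:70 " ⋆ " y:71 => derivationExtensionMul mul D δ x y

theorem derivationExtensionMul_add_left (x y z : A × E) : (x + y) ⋆ z = (x ⋆ z) + (y ⋆ z) := by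
  simp only [derivationExtensionMul, Prod.fst_add, Prod.snd_add, map_add, LinearMap.add_apply,
    add_smul, add_mul, Prod.mk_add_mk]
  abel_nf

theorem derivationExtensionMul_add_right (x y z : A × E) : x ⋆ (y + z) = (x ⋆ y) + (x ⋆ z) := by
  simp only [derivationExtensionMul, Prod.fst_add, Prod.snd_add, map_add, smul_add, mul_add,
    Prod.mk_add_mk]
  abel_nf

theorem derivationExtensionMul_smul_left_of_tower [IsScalarTower K A E] (k : K)
    (x y : A × E) : (k • x) ⋆ y = k • (x ⋆ y) := by
  simp only [derivationExtensionMul, Prod.smul_fst, Prod.smul_snd, Prod.smul_mk,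
    LinearMap.map_smul_of_tower, LinearMap.smul_apply, smul_add, smul_mul_assoc, smul_assoc]

theorem derivationExtensionMul_smul_right_of_tower [IsScalarTower K A E] (k : K)
    (x y : A × E) : x ⋆ (k • y) = k • (x ⋆ y) := by
  simp only [derivationExtensionMul, Prod.smul_fst, Prod.smul_snd, Prod.smul_mk,
    LinearMap.map_smul_of_tower, δ.map_smul, smul_add, mul_smul_comm, smul_comm x.1 k]

theorem derivationExtensionMul_smul_left (a : A) (x y : A × E) : (a • x) ⋆ y = a • (x ⋆ y) := by
  simp only [derivationExtensionMul, Prod.smul_fst, Prod.smul_snd, Prod.smul_mk, map_smul,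
    LinearMap.smul_apply, smul_add, smul_eq_mul, mul_assoc, smul_smul]

theorem derivationExtensionMul_leibniz (hD : ∀ (a : A) (X : E), D (a • X) = δ a • X + a • D X)
    (a : A) (x y : A × E) : x ⋆ (a • y) = a • (x ⋆ y) + (x.1 • δ) a • y := by
  simp only [derivationExtensionMul, Prod.smul_fst, Prod.smul_snd, Prod.smul_mk, map_smul,
    Derivation.leibniz, hD, Derivation.smul_apply, smul_eq_mul, smul_add, smul_smul,
    Prod.ext_iff, Prod.fst_add, Prod.snd_add]
  constructor
  · ring
  · rw [mul_comm a x.1]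
    abel

theorem derivationExtensionMul_associator
    (hD₁ : ∀ X Y : E, D (mul X Y) = mul (D X) Y + mul X (D Y))
    (hD₂ : ∀ (a : A) (X : E), D (a • X) = δ a • X + a • D X) (x y z : A × E) :
    (x ⋆ (y ⋆ z)) - ((x ⋆ y) ⋆ z) =
      (x.1 * y.1 * δ (δ z.1), mul x.2 (mul y.2 z.2) - mul (mul x.2 y.2) z.2 +
        (y.1 • mul x.2 (D z.2) + x.1 • mul y.2 (D z.2)) + (x.1 * y.1) • D (D z.2)) := by
  simp only [derivationExtensionMul, Prod.mk_sub_mk, map_add, map_smul, Derivation.leibniz,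
    smul_eq_mul, LinearMap.add_apply, LinearMap.smul_apply, hD₁, hD₂, smul_add, smul_smul,
    Prod.mk.injEq]
  constructor
  · ring
  · abel

theorem derivationExtensionMul_isLeftSymmetric
    (hpre : ∀ X Y Z : E, mul X (mul Y Z) - mul (mul X Y) Z = mul Y (mul X Z) - mul (mul Y X) Z)
    (hD₁ : ∀ X Y : E, D (mul X Y) = mul (D X) Y + mul X (D Y))
    (hD₂ : ∀ (a : A) (X : E), D (a • X) = δ a • X + a • D X) (x y z : A × E) :
    (x ⋆ (y ⋆ z)) - ((x ⋆ y) ⋆ z) = (y ⋆ (x ⋆ z)) - ((y ⋆ x) ⋆ z) := by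
  rw [derivationExtensionMul_associator mul D δ hD₁ hD₂,
    derivationExtensionMul_associator mul D δ hD₁ hD₂, hpre, mul_comm x.1 y.1,
    add_comm (y.1 • _)]

end DerivationExtension

/-- given an `A`-bilinear pre-Lie product on `E` and a derivation
`(D, δ)` of `E`, the `A`-module `A ⊕ E` becomes a pre-Lie-Rinehart algebra with
product `(a,X)∗(b,Y) = (a δ(b), X·Y + a • D(Y))` and anchor `θ(a,X) = a • δ`. -/
theorem derivation_extension_isPreLieRinehart {K A E : Type*} [Field K] [CommRing A]
    [Algebra K A] [AddCommGroup E] [Module K E] [Module A E] [IsScalarTower K A E]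
    (mul : E →ₗ[A] E →ₗ[A] E)
    (hpre : ∀ X Y Z : E, mul X (mul Y Z) - mul (mul X Y) Z
      = mul Y (mul X Z) - mul (mul Y X) Z)
    (D : E →ₗ[K] E) (δ : Derivation K A A)
    (hD1 : ∀ X Y : E, D (mul X Y) = mul (D X) Y + mul X (D Y))
    (hD2 : ∀ (a : A) (X : E), D (a • X) = δ a • X + a • D X) :
    IsPreLieRinehart K
      (fun p q : A × E => (p.1 * δ q.1, mul p.2 q.2 + p.1 • D q.2))
      (fun p : A × E => p.1 • δ) := by
  exact ⟨derivationExtensionMul_add_left mul D δ, derivationExtensionMul_add_right mul D δ,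
    derivationExtensionMul_smul_left_of_tower mul D δ,
    derivationExtensionMul_smul_right_of_tower mul D δ,
    derivationExtensionMul_isLeftSymmetric mul D δ hpre hD1 hD2,
    derivationExtensionMul_leibniz mul D δ hD2, derivationExtensionMul_smul_left mul D δ,
    fun X Y => add_smul X.1 Y.1 δ, fun a X => mul_smul a X.1 δ,
    fun X Y => (δ.lie_smul_smul_self X.1 Y.1).symm⟩
end

section
/- Let (E, ·_E, θ_E) be a pre-Lie-Rinehart algebra over A and (𝓔; ρ, μ) a representation of E. Then F = E ⊕ 𝓔 with product (X+u) ∗ (Y+v) = X·_E Y + ρ(X)v + μ(Y)u and anchor θ_F(X+u) = θ_E(X) is a pre-Lie-Rinehart algebra over A (the semidirect product). -/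
/-- A representation `(ρ, μ)` of the pre-Lie-Rinehart algebra `(E, mul, θ)` on the
`A`-module `F`: `ρ` is a Lie-Rinehart representation of the sub-adjacent
Lie-Rinehart algebra `E^c` on `F`, `μ(X)` is `A`-linear with `μ` `A`-linear in `X`,
and `ρ(X)μ(Y) − μ(Y)ρ(X) = μ(X·Y) − μ(Y)μ(X)`. -/
def IsPLRRep (K : Type*) {A E F : Type*} [Field K] [CommRing A] [Algebra K A]
    [AddCommGroup E] [Module K E] [Module A E] [IsScalarTower K A E]
    [AddCommGroup F] [Module K F] [Module A F] [IsScalarTower K A F]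
    (mul : E → E → E) (θ : E → Derivation K A A)
    (ρ μ : E → F → F) : Prop :=
  (∀ (X Y : E) (u : F), ρ (X + Y) u = ρ X u + ρ Y u) ∧
  (∀ (X : E) (u v : F), ρ X (u + v) = ρ X u + ρ X v) ∧
  (∀ (a : A) (X : E) (u : F), ρ (a • X) u = a • ρ X u) ∧
  (∀ (a : A) (X : E) (u : F), ρ X (a • u) = a • ρ X u + θ X a • u) ∧
  (∀ (X Y : E) (u : F), ρ (mul X Y - mul Y X) u = ρ X (ρ Y u) - ρ Y (ρ X u)) ∧
  (∀ (X Y : E) (u : F), μ (X + Y) u = μ X u + μ Y u) ∧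
  (∀ (X : E) (u v : F), μ X (u + v) = μ X u + μ X v) ∧
  (∀ (a : A) (X : E) (u : F), μ (a • X) u = a • μ X u) ∧
  (∀ (a : A) (X : E) (u : F), μ X (a • u) = a • μ X u) ∧
  (∀ (X Y : E) (u : F), ρ X (μ Y u) - μ Y (ρ X u) = μ (mul X Y) u - μ Y (μ X u))


namespace IsPLRRep

variable {K A E F : Type*} [Field K] [CommRing A] [Algebra K A]
  [AddCommGroup E] [Module K E] [Module A E] [IsScalarTower K A E]
  [AddCommGroup F] [Module K F] [Module A F] [IsScalarTower K A F]
  {mul : E → E → E} {θ : E → Derivation K A A} {ρ μ : E → F → F}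

theorem rho_add_left (h : IsPLRRep K mul θ ρ μ) (X Y : E) (u : F) :
    ρ (X + Y) u = ρ X u + ρ Y u :=
  h.1 X Y u

theorem rho_add_right (h : IsPLRRep K mul θ ρ μ) (X : E) (u v : F) :
    ρ X (u + v) = ρ X u + ρ X v :=
  h.2.1 X u v

theorem rho_smul_left (h : IsPLRRep K mul θ ρ μ) (a : A) (X : E) (u : F) :
    ρ (a • X) u = a • ρ X u :=
  h.2.2.1 a X u

theorem rho_smul_right (h : IsPLRRep K mul θ ρ μ) (a : A) (X : E) (u : F) :
    ρ X (a • u) = a • ρ X u + θ X a • u :=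
  h.2.2.2.1 a X u

theorem rho_commutator (h : IsPLRRep K mul θ ρ μ) (X Y : E) (u : F) :
    ρ (mul X Y - mul Y X) u = ρ X (ρ Y u) - ρ Y (ρ X u) :=
  h.2.2.2.2.1 X Y u

theorem mu_add_left (h : IsPLRRep K mul θ ρ μ) (X Y : E) (u : F) :
    μ (X + Y) u = μ X u + μ Y u :=
  h.2.2.2.2.2.1 X Y u

theorem mu_add_right (h : IsPLRRep K mul θ ρ μ) (X : E) (u v : F) :
    μ X (u + v) = μ X u + μ X v :=
  h.2.2.2.2.2.2.1 X u v

theorem mu_smul_left (h : IsPLRRep K mul θ ρ μ) (a : A) (X : E) (u : F) :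
    μ (a • X) u = a • μ X u :=
  h.2.2.2.2.2.2.2.1 a X u

theorem mu_smul_right (h : IsPLRRep K mul θ ρ μ) (a : A) (X : E) (u : F) :
    μ X (a • u) = a • μ X u :=
  h.2.2.2.2.2.2.2.2.1 a X u

theorem rho_mu_comm (h : IsPLRRep K mul θ ρ μ) (X Y : E) (u : F) :
    ρ X (μ Y u) - μ Y (ρ X u) = μ (mul X Y) u - μ Y (μ X u) :=
  h.2.2.2.2.2.2.2.2.2 X Y u

theorem rho_sub_left (h : IsPLRRep K mul θ ρ μ) (X Y : E) (u : F) :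
    ρ (X - Y) u = ρ X u - ρ Y u :=
  (AddMonoidHom.mk' (ρ · u) fun X Y => h.rho_add_left X Y u).map_sub X Y

/-! The `semidirect_*` lemmas are the second components of the axioms for the elements
`(X, u)`, `(Y, v)`, `(Z, w)` of `E × F`. -/

theorem semidirect_add_left (h : IsPLRRep K mul θ ρ μ) (X Y Z : E) (u v w : F) :
    ρ (X + Y) w + μ Z (u + v) = (ρ X w + μ Z u) + (ρ Y w + μ Z v) := by
  rw [h.rho_add_left, h.mu_add_right]
  abel

theorem semidirect_add_right (h : IsPLRRep K mul θ ρ μ) (X Y Z : E) (u v w : F) :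
    ρ X (v + w) + μ (Y + Z) u = (ρ X v + μ Y u) + (ρ X w + μ Z u) := by
  rw [h.rho_add_right, h.mu_add_left]
  abel

theorem semidirect_smul_left (h : IsPLRRep K mul θ ρ μ) (a : A) (X Y : E) (u v : F) :
    ρ (a • X) v + μ Y (a • u) = a • (ρ X v + μ Y u) := by
  rw [h.rho_smul_left, h.mu_smul_right, smul_add]

theorem semidirect_smul_right (h : IsPLRRep K mul θ ρ μ) (a : A) (X Y : E) (u v : F) :
    ρ X (a • v) + μ (a • Y) u = a • (ρ X v + μ Y u) + θ X a • v := by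
  rw [h.rho_smul_right, h.mu_smul_left, smul_add]
  abel

theorem semidirect_smul_left_of_tower (h : IsPLRRep K mul θ ρ μ) (k : K) (X Y : E) (u v : F) :
    ρ (k • X) v + μ Y (k • u) = k • (ρ X v + μ Y u) := by
  simpa only [algebraMap_smul] using h.semidirect_smul_left (algebraMap K A k) X Y u v

/-- The anchor term of `semidirect_smul_right` vanishes: derivations kill scalars from `K`. -/
theorem semidirect_smul_right_of_tower (h : IsPLRRep K mul θ ρ μ) (k : K) (X Y : E) (u v : F) :
    ρ X (k • v) + μ (k • Y) u = k • (ρ X v + μ Y u) := by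
  simpa only [algebraMap_smul, Derivation.map_algebraMap, zero_smul, add_zero] using
    h.semidirect_smul_right (algebraMap K A k) X Y u v

theorem semidirect_leftSymmetric (h : IsPLRRep K mul θ ρ μ) (X Y Z : E) (u v w : F) :
    ρ X (ρ Y w + μ Z v) + μ (mul Y Z) u - (ρ (mul X Y) w + μ Z (ρ X v + μ Y u))
      = ρ Y (ρ X w + μ Z u) + μ (mul X Z) v - (ρ (mul Y X) w + μ Z (ρ Y u + μ X v)) := by
  have hw := h.rho_commutator X Y w
  rw [h.rho_sub_left] at hw
  simp only [h.rho_add_right, h.mu_add_right]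
  linear_combination (norm := abel) -hw + h.rho_mu_comm X Z v - h.rho_mu_comm Y Z u

end IsPLRRep

/-- the semidirect product. Given a pre-Lie-Rinehart algebra
`(E, mul, θ)` and a representation `(ρ, μ)` on the `A`-module `F`, the `A`-module
`E ⊕ F` with product `(X+u)∗(Y+v) = X·Y + ρ(X)v + μ(Y)u` and anchor
`θ(X+u) = θ(X)` is a pre-Lie-Rinehart algebra over `A`. -/
theorem semidirect_isPreLieRinehart {K A E F : Type*} [Field K] [CommRing A]
    [Algebra K A]
    [AddCommGroup E] [Module K E] [Module A E] [IsScalarTower K A E]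
    [AddCommGroup F] [Module K F] [Module A F] [IsScalarTower K A F]
    (mul : E → E → E) (θ : E → Derivation K A A)
    (ρ μ : E → F → F)
    (hE : IsPreLieRinehart K mul θ)
    (hrep : IsPLRRep K mul θ ρ μ) :
    IsPreLieRinehart K
      (fun p q : E × F => (mul p.1 q.1, ρ p.1 q.2 + μ q.1 p.2))
      (fun p : E × F => θ p.1) := by
  obtain ⟨hadd_mul, hmul_add, hsmul_mul, hmul_smul, hleftSymm, hleibniz, hsmul_mul', hθ_add,
    hθ_smul, hθ_comm⟩ := hE
  exact ⟨fun p q r => Prod.ext (hadd_mul _ _ _) (hrep.semidirect_add_left _ _ _ _ _ _),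
    fun p q r => Prod.ext (hmul_add _ _ _) (hrep.semidirect_add_right _ _ _ _ _ _),
    fun k p q => Prod.ext (hsmul_mul _ _ _) (hrep.semidirect_smul_left_of_tower _ _ _ _ _),
    fun k p q => Prod.ext (hmul_smul _ _ _) (hrep.semidirect_smul_right_of_tower _ _ _ _ _),
    fun p q r => Prod.ext (hleftSymm _ _ _) (hrep.semidirect_leftSymmetric _ _ _ _ _ _),
    fun a p q => Prod.ext (hleibniz _ _ _) (hrep.semidirect_smul_right _ _ _ _ _),
    fun a p q => Prod.ext (hsmul_mul' _ _ _) (hrep.semidirect_smul_left _ _ _ _ _),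
    fun p q => hθ_add _ _, fun a p => hθ_smul _ _, fun p q => hθ_comm _ _⟩
end

section
/- Let (E, 𝓔, ∂, (ρ,μ)) be a crossed module for pre-Lie-Rinehart algebras over A. Then for all X ∈ E and u,v ∈ 𝓔: ρ(X)(u·_𝓔 v) = (ρ(X)u)·_𝓔 v + u·_𝓔(ρ(X)v) − (μ(X)u)·_𝓔 v, and μ(X)(u·_𝓔 v) = μ(X)(v·_𝓔 u) + u·_𝓔(μ(X)v) − v·_𝓔(μ(X)u). -/
/-- A crossed module for pre-Lie-Rinehart algebras over `A`: a pre-Lie-Rinehart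
algebra `(E, mulE, θ)`, a pre-Lie `K`-algebra `(F, mulF)` which is an `A`-module,
a representation `(ρ, μ)` of `E` on `F`, and an `A`-linear pre-Lie homomorphism
`par : F → E` such that `par(ρ(X)u) = X·par(u)`, `par(μ(X)u) = par(u)·X`,
`ρ(par u)v = μ(par v)u = u·v`, and `θ ∘ par = 0`. -/
def IsPLRCrossedModule (K : Type*) {A E F : Type*} [Field K] [CommRing A]
    [Algebra K A]
    [AddCommGroup E] [Module K E] [Module A E] [IsScalarTower K A E]
    [AddCommGroup F] [Module K F] [Module A F] [IsScalarTower K A F]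
    (mulE : E → E → E) (θ : E → Derivation K A A)
    (mulF : F → F → F) (par : F → E) (ρ μ : E → F → F) : Prop :=
  IsPreLieRinehart K mulE θ ∧
  -- (F, mulF) is a pre-Lie K-algebra
  (∀ u v w : F, mulF (u + v) w = mulF u w + mulF v w) ∧
  (∀ u v w : F, mulF u (v + w) = mulF u v + mulF u w) ∧
  (∀ (k : K) (u v : F), mulF (k • u) v = k • mulF u v) ∧
  (∀ (k : K) (u v : F), mulF u (k • v) = k • mulF u v) ∧
  (∀ u v w : F, mulF u (mulF v w) - mulF (mulF u v) w
      = mulF v (mulF u w) - mulF (mulF v u) w) ∧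
  -- (ρ, μ) is a representation of E on F
  IsPLRRep K mulE θ ρ μ ∧
  -- par is an A-linear pre-Lie algebra homomorphism
  (∀ u v : F, par (u + v) = par u + par v) ∧
  (∀ (a : A) (u : F), par (a • u) = a • par u) ∧
  (∀ u v : F, par (mulF u v) = mulE (par u) (par v)) ∧
  -- crossed module axioms
  (∀ (X : E) (u : F), par (ρ X u) = mulE X (par u)) ∧
  (∀ (X : E) (u : F), par (μ X u) = mulE (par u) X) ∧
  (∀ u v : F, ρ (par u) v = mulF u v) ∧
  (∀ u v : F, μ (par v) u = mulF u v) ∧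
  (∀ u : F, θ (par u) = 0)

namespace IsPLRCrossedModule

variable {K A E F : Type*} [Field K] [CommRing A] [Algebra K A]
  [AddCommGroup E] [Module K E] [Module A E] [IsScalarTower K A E]
  [AddCommGroup F] [Module K F] [Module A F] [IsScalarTower K A F]
  {mulE : E → E → E} {θ : E → Derivation K A A}
  {mulF : F → F → F} {par : F → E} {ρ μ : E → F → F}

/-- The commutator relation of `ρ` at `(X, par u)`, with `X·par u - par u·X` lifted to
`par (ρ X u - μ X u)`. -/
theorem rho_apply_mul (hcm : IsPLRCrossedModule K mulE θ mulF par ρ μ) (X : E) (u v : F) :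
    ρ X (mulF u v) = mulF (ρ X u) v + mulF u (ρ X v) - mulF (μ X u) v := by
  obtain ⟨-, -, -, -, -, -, ⟨rho_add, -, -, -, rho_commutator, -⟩, -, -, -,
    par_rho, par_mu, rho_par, -, -⟩ := hcm
  have rho_sub : ∀ Y Z : E, ρ (Y - Z) v = ρ Y v - ρ Z v :=
    (AddMonoidHom.mk' (fun Y ↦ ρ Y v) fun Y Z ↦ rho_add Y Z v).map_sub
  have key : ρ X (mulF u v) - mulF u (ρ X v) = mulF (ρ X u) v - mulF (μ X u) v := by
    calc ρ X (mulF u v) - mulF u (ρ X v)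
        = ρ X (ρ (par u) v) - ρ (par u) (ρ X v) := by rw [rho_par, rho_par]
      _ = ρ (par (ρ X u) - par (μ X u)) v := by rw [par_rho, par_mu, rho_commutator]
      _ = mulF (ρ X u) v - mulF (μ X u) v := by rw [rho_sub, rho_par, rho_par]
  linear_combination (norm := abel) key

/-- The mixed relation `ρ(X)μ(Y) - μ(Y)ρ(X) = μ(X·Y) - μ(Y)μ(X)` at `(par v, X)`,
using `par v · X = par (μ X v)`. -/
theorem mu_apply_mul (hcm : IsPLRCrossedModule K mulE θ mulF par ρ μ) (X : E) (u v : F) :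
    μ X (mulF u v) = μ X (mulF v u) + mulF u (μ X v) - mulF v (μ X u) := by
  obtain ⟨-, -, -, -, -, -, ⟨-, -, -, -, -, -, -, -, -, rho_mu_comm⟩, -, -, -,
    -, par_mu, rho_par, mu_par, -⟩ := hcm
  have key : mulF v (μ X u) - μ X (mulF v u) = mulF u (μ X v) - μ X (mulF u v) := by
    have h := rho_mu_comm (par v) X u
    rwa [← par_mu, rho_par, rho_par, mu_par, mu_par] at h
  linear_combination (norm := abel) key

end IsPLRCrossedModule

/-- in a crossed module `(E, F, par, (ρ,μ))` for pre-Lie-Rinehart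
algebras, `ρ(X)(u·v) = (ρ(X)u)·v + u·(ρ(X)v) − (μ(X)u)·v` and
`μ(X)(u·v) = μ(X)(v·u) + u·(μ(X)v) − v·(μ(X)u)`. -/
theorem crossedModule_derivation_identities {K A E F : Type*} [Field K] [CommRing A]
    [Algebra K A]
    [AddCommGroup E] [Module K E] [Module A E] [IsScalarTower K A E]
    [AddCommGroup F] [Module K F] [Module A F] [IsScalarTower K A F]
    (mulE : E → E → E) (θ : E → Derivation K A A)
    (mulF : F → F → F) (par : F → E) (ρ μ : E → F → F)
    (hcm : IsPLRCrossedModule K mulE θ mulF par ρ μ) :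
    (∀ (X : E) (u v : F),
      ρ X (mulF u v) = mulF (ρ X u) v + mulF u (ρ X v) - mulF (μ X u) v) ∧
    (∀ (X : E) (u v : F),
      μ X (mulF u v) = μ X (mulF v u) + mulF u (μ X v) - mulF v (μ X u)) :=
  ⟨hcm.rho_apply_mul, hcm.mu_apply_mul⟩
end

section
/- Let (E, 𝓔, ∂, (ρ,μ)) be a crossed module for pre-Lie-Rinehart algebras over A. Then E ⊕ 𝓔 carries a pre-Lie-Rinehart algebra structure with product (X+u)∗(Y+v) = X·_E Y + ρ(X)v + μ(Y)u + u·_𝓔 v and anchor θ(X+u) = θ_E(X). -/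
theorem map_sub_left_of_map_add_left {E F G : Type*} [AddGroup E] [AddGroup G] {f : E → F → G}
    (h : ∀ X Y u, f (X + Y) u = f X u + f Y u) (X Y : E) (u : F) :
    f (X - Y) u = f X u - f Y u :=
  map_sub (AddMonoidHom.mk' (f · u) fun X Y => h X Y u) X Y

theorem map_smul_left_of_isScalarTower (K : Type*) {A M N P : Type*} [CommSemiring K]
    [Semiring A] [Algebra K A] [AddCommMonoid M] [Module K M] [Module A M] [IsScalarTower K A M]
    [AddCommMonoid P] [Module K P] [Module A P] [IsScalarTower K A P] {f : M → N → P}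
    (h : ∀ (a : A) x y, f (a • x) y = a • f x y) (k : K) (x : M) (y : N) :
    f (k • x) y = k • f x y := by
  rw [← algebraMap_smul A k x, h, algebraMap_smul]

theorem map_smul_right_of_leibniz (K : Type*) {A M N : Type*} [CommSemiring K] [CommSemiring A]
    [Algebra K A] [AddCommMonoid N] [Module K N] [Module A N] [IsScalarTower K A N]
    {f : M → N → N} {θ : M → Derivation K A A}
    (h : ∀ (a : A) x y, f x (a • y) = a • f x y + θ x a • y) (k : K) (x : M) (y : N) :
    f x (k • y) = k • f x y := by
  rw [← algebraMap_smul A k y, h, Derivation.map_algebraMap, zero_smul, add_zero, algebraMap_smul]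

theorem mulF_smul_right {K A E F : Type*} [CommSemiring K] [CommSemiring A] [Algebra K A]
    [AddCommMonoid F] [Module A F] {θ : E → Derivation K A A} {mulF : F → F → F} {par : F → E}
    {ρ : E → F → F} (hρ : ∀ (a : A) X u, ρ X (a • u) = a • ρ X u + θ X a • u)
    (hρ_par : ∀ u v, ρ (par u) v = mulF u v) (hθ_par : ∀ u, θ (par u) = 0) (a : A) (u v : F) :
    mulF u (a • v) = a • mulF u v := by
  rw [← hρ_par, hρ, hθ_par, Derivation.zero_apply, zero_smul, add_zero, hρ_par]

theorem mulF_smul_left {A E F : Type*} [SMul A F] {mulF : F → F → F} {par : F → E}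
    {μ : E → F → F} (hμ : ∀ (a : A) X u, μ X (a • u) = a • μ X u)
    (hμ_par : ∀ u v, μ (par v) u = mulF u v) (a : A) (u v : F) :
    mulF (a • u) v = a • mulF u v := by
  rw [← hμ_par, hμ, hμ_par]

section CrossedModuleMul

variable {E F : Type*} [AddCommGroup F] {mulE : E → E → E} {mulF : F → F → F}
  {par : F → E} {ρ μ : E → F → F}

theorem rho_mulF_sub [AddCommGroup E] (hρ_add : ∀ X Y u, ρ (X + Y) u = ρ X u + ρ Y u)
    (hρ_bracket : ∀ X Y u, ρ (mulE X Y - mulE Y X) u = ρ X (ρ Y u) - ρ Y (ρ X u))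
    (hpar_ρ : ∀ X u, par (ρ X u) = mulE X (par u)) (hpar_μ : ∀ X u, par (μ X u) = mulE (par u) X)
    (hρ_par : ∀ u v, ρ (par u) v = mulF u v) (X : E) (v w : F) :
    ρ X (mulF v w) - mulF (ρ X v) w = mulF v (ρ X w) - mulF (μ X v) w := by
  have h := hρ_bracket X (par v) w
  rw [map_sub_left_of_map_add_left hρ_add, ← hpar_ρ, ← hpar_μ] at h
  simp only [hρ_par] at h
  linear_combination (norm := abel) -h

theorem mulF_mu_sub
    (hρμ : ∀ X Y u, ρ X (μ Y u) - μ Y (ρ X u) = μ (mulE X Y) u - μ Y (μ X u))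
    (hpar_μ : ∀ X u, par (μ X u) = mulE (par u) X)
    (hρ_par : ∀ u v, ρ (par u) v = mulF u v) (hμ_par : ∀ u v, μ (par v) u = mulF u v)
    (Z : E) (u v : F) :
    mulF u (μ Z v) - μ Z (mulF u v) = mulF v (μ Z u) - μ Z (mulF v u) := by
  have h := hρμ (par u) Z v
  rwa [← hpar_μ, hρ_par, hρ_par, hμ_par, hμ_par] at h

variable [AddCommGroup E]

def crossedModuleMul (mulE : E → E → E) (mulF : F → F → F) (ρ μ : E → F → F) (p q : E × F) :
    E × F :=
  (mulE p.1 q.1, ρ p.1 q.2 + μ q.1 p.2 + mulF p.2 q.2)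

local notation:70 p:70 " ⋆ " q:71 => crossedModuleMul mulE mulF ρ μ p q

theorem crossedModuleMul_add_left (hE : ∀ X Y Z, mulE (X + Y) Z = mulE X Z + mulE Y Z)
    (hρ : ∀ X Y u, ρ (X + Y) u = ρ X u + ρ Y u) (hμ : ∀ X u v, μ X (u + v) = μ X u + μ X v)
    (hF : ∀ u v w, mulF (u + v) w = mulF u w + mulF v w) (p q r : E × F) :
    (p + q) ⋆ r = p ⋆ r + q ⋆ r := by
  ext
  · exact hE p.1 q.1 r.1
  · simp only [crossedModuleMul, Prod.fst_add, Prod.snd_add, hρ, hμ, hF]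
    abel

theorem crossedModuleMul_add_right (hE : ∀ X Y Z, mulE X (Y + Z) = mulE X Y + mulE X Z)
    (hρ : ∀ X u v, ρ X (u + v) = ρ X u + ρ X v) (hμ : ∀ X Y u, μ (X + Y) u = μ X u + μ Y u)
    (hF : ∀ u v w, mulF u (v + w) = mulF u v + mulF u w) (p q r : E × F) :
    p ⋆ (q + r) = p ⋆ q + p ⋆ r := by
  ext
  · exact hE p.1 q.1 r.1
  · simp only [crossedModuleMul, Prod.fst_add, Prod.snd_add, hρ, hμ, hF]
    abel

theorem crossedModuleMul_preLie (hE : ∀ X Y Z, mulE X (mulE Y Z) - mulE (mulE X Y) Z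
      = mulE Y (mulE X Z) - mulE (mulE Y X) Z)
    (hρ_add_left : ∀ X Y u, ρ (X + Y) u = ρ X u + ρ Y u)
    (hρ_add_right : ∀ X u v, ρ X (u + v) = ρ X u + ρ X v)
    (hρ_bracket : ∀ X Y u, ρ (mulE X Y - mulE Y X) u = ρ X (ρ Y u) - ρ Y (ρ X u))
    (hμ_add : ∀ X u v, μ X (u + v) = μ X u + μ X v)
    (hρμ : ∀ X Y u, ρ X (μ Y u) - μ Y (ρ X u) = μ (mulE X Y) u - μ Y (μ X u))
    (hF_add_left : ∀ u v w, mulF (u + v) w = mulF u w + mulF v w)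
    (hF_add_right : ∀ u v w, mulF u (v + w) = mulF u v + mulF u w)
    (hF : ∀ u v w, mulF u (mulF v w) - mulF (mulF u v) w = mulF v (mulF u w) - mulF (mulF v u) w)
    (hρ_mulF : ∀ X v w, ρ X (mulF v w) - mulF (ρ X v) w = mulF v (ρ X w) - mulF (μ X v) w)
    (hmulF_μ : ∀ Z u v, mulF u (μ Z v) - μ Z (mulF u v) = mulF v (μ Z u) - μ Z (mulF v u))
    (p q r : E × F) : p ⋆ (q ⋆ r) - (p ⋆ q) ⋆ r = q ⋆ (p ⋆ r) - (q ⋆ p) ⋆ r := by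
  obtain ⟨X, u⟩ := p
  obtain ⟨Y, v⟩ := q
  obtain ⟨Z, w⟩ := r
  ext
  · exact hE X Y Z
  · simp only [crossedModuleMul, Prod.snd_sub, hρ_add_right, hμ_add, hF_add_left, hF_add_right]
    have hρ_comm := hρ_bracket X Y w
    rw [map_sub_left_of_map_add_left hρ_add_left] at hρ_comm
    linear_combination (norm := abel) -hρ_comm + hρμ X Z v - hρμ Y Z u + hρ_mulF X v w
      - hρ_mulF Y u w + hmulF_μ Z u v + hF u v w

variable {K A : Type*} [CommSemiring K] [CommSemiring A] [Algebra K A] [Module A E] [Module A F]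

theorem crossedModuleMul_smul_left (hE : ∀ (a : A) X Y, mulE (a • X) Y = a • mulE X Y)
    (hρ : ∀ (a : A) X u, ρ (a • X) u = a • ρ X u) (hμ : ∀ (a : A) X u, μ X (a • u) = a • μ X u)
    (hF : ∀ (a : A) u v, mulF (a • u) v = a • mulF u v) (a : A) (p q : E × F) :
    (a • p) ⋆ q = a • (p ⋆ q) := by
  ext
  · exact hE a p.1 q.1
  · simp only [crossedModuleMul, Prod.smul_fst, Prod.smul_snd, hρ, hμ, hF, smul_add]

theorem crossedModuleMul_smul_right {θ : E → Derivation K A A}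
    (hE : ∀ (a : A) X Y, mulE X (a • Y) = a • mulE X Y + θ X a • Y)
    (hρ : ∀ (a : A) X u, ρ X (a • u) = a • ρ X u + θ X a • u)
    (hμ : ∀ (a : A) X u, μ (a • X) u = a • μ X u)
    (hF : ∀ (a : A) u v, mulF u (a • v) = a • mulF u v) (a : A) (p q : E × F) :
    p ⋆ (a • q) = a • (p ⋆ q) + θ p.1 a • q := by
  ext
  · exact hE a p.1 q.1
  · simp only [crossedModuleMul, Prod.smul_fst, Prod.smul_snd, Prod.snd_add, hρ, hμ, hF,
      smul_add]
    abel

end CrossedModuleMul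

/-- for a crossed module `(E, F, par, (ρ,μ))` for pre-Lie-Rinehart
algebras over `A`, the `A`-module `E ⊕ F` carries a pre-Lie-Rinehart algebra
structure with product `(X+u)∗(Y+v) = X·Y + ρ(X)v + μ(Y)u + u·v` and anchor
`θ(X+u) = θ(X)`. -/
theorem crossedModule_semidirect_isPreLieRinehart {K A E F : Type*} [Field K]
    [CommRing A] [Algebra K A]
    [AddCommGroup E] [Module K E] [Module A E] [IsScalarTower K A E]
    [AddCommGroup F] [Module K F] [Module A F] [IsScalarTower K A F]
    (mulE : E → E → E) (θ : E → Derivation K A A)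
    (mulF : F → F → F) (par : F → E) (ρ μ : E → F → F)
    (hcm : IsPLRCrossedModule K mulE θ mulF par ρ μ) :
    IsPreLieRinehart K
      (fun p q : E × F => (mulE p.1 q.1, ρ p.1 q.2 + μ q.1 p.2 + mulF p.2 q.2))
      (fun p : E × F => θ p.1) := by
  obtain ⟨hE, hF_add_left, hF_add_right, -, -, hF_preLie, hrep, -, -, -, hpar_ρ, hpar_μ, hρ_par,
    hμ_par, hθ_par⟩ := hcm
  obtain ⟨hE_add_left, hE_add_right, -, -, hE_preLie, hE_smul_right, hE_smul_left, hθ_add,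
    hθ_smul, hθ_bracket⟩ := hE
  obtain ⟨hρ_add_left, hρ_add_right, hρ_smul_left, hρ_smul_right, hρ_bracket, hμ_add_left,
    hμ_add_right, hμ_smul_left, hμ_smul_right, hρμ⟩ := hrep
  have hsmul_left := crossedModuleMul_smul_left hE_smul_left hρ_smul_left hμ_smul_right
    (mulF_smul_left hμ_smul_right hμ_par)
  have hsmul_right := crossedModuleMul_smul_right hE_smul_right hρ_smul_right hμ_smul_left
    (mulF_smul_right hρ_smul_right hρ_par hθ_par)
  exact ⟨crossedModuleMul_add_left hE_add_left hρ_add_left hμ_add_right hF_add_left,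
    crossedModuleMul_add_right hE_add_right hρ_add_right hμ_add_left hF_add_right,
    map_smul_left_of_isScalarTower K hsmul_left, map_smul_right_of_leibniz K hsmul_right,
    crossedModuleMul_preLie hE_preLie hρ_add_left hρ_add_right hρ_bracket hμ_add_right hρμ
      hF_add_left hF_add_right hF_preLie
      (rho_mulF_sub hρ_add_left hρ_bracket hpar_ρ hpar_μ hρ_par)
      (mulF_mu_sub hρμ hpar_μ hρ_par hμ_par),
    hsmul_right, hsmul_left, fun p q => hθ_add p.1 q.1, fun a p => hθ_smul a p.1,
    fun p q => hθ_bracket p.1 q.1⟩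
end

section
/- Let (E, 𝓔, ∂, (ρ,μ)) be a crossed module for pre-Lie-Rinehart algebras over A. Then (E^c, 𝓔^c, ∂, ρ−μ) is a crossed module for Lie-Rinehart algebras, where E^c and 𝓔^c are the sub-adjacent (Lie-Rinehart, resp. Lie) algebras with brackets given by commutators of the pre-Lie products. -/
/-- A crossed module for Lie-Rinehart algebras over `A`: a Lie-Rinehart algebra
`(E, brE, θ)`, a Lie `K`-algebra `(F, brF)` which is an `A`-module, a Lie-Rinehart
representation `σ` of `E` on `F` acting by derivations of `brF`, and an
`A`-linear Lie algebra morphism `par : F → E` with `par(σ(X)u) = [X, par u]`,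
`σ(par u)v = [u,v]`, and `θ ∘ par = 0`. -/
def IsLRCrossedModule (K : Type*) {A E F : Type*} [Field K] [CommRing A]
    [Algebra K A]
    [AddCommGroup E] [Module K E] [Module A E] [IsScalarTower K A E]
    [AddCommGroup F] [Module K F] [Module A F] [IsScalarTower K A F]
    (brE : E → E → E) (θ : E → Derivation K A A)
    (brF : F → F → F) (par : F → E) (σ : E → F → F) : Prop :=
  IsLieRinehart K brE θ ∧
  -- (F, brF) is a Lie K-algebra
  (∀ u v w : F, brF (u + v) w = brF u w + brF v w) ∧
  (∀ u v w : F, brF u (v + w) = brF u v + brF u w) ∧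
  (∀ (k : K) (u v : F), brF (k • u) v = k • brF u v) ∧
  (∀ (k : K) (u v : F), brF u (k • v) = k • brF u v) ∧
  (∀ u : F, brF u u = 0) ∧
  (∀ u v w : F, brF u (brF v w) + brF v (brF w u) + brF w (brF u v) = 0) ∧
  -- σ is a Lie-Rinehart representation of E on F
  (∀ (X Y : E) (u : F), σ (X + Y) u = σ X u + σ Y u) ∧
  (∀ (X : E) (u v : F), σ X (u + v) = σ X u + σ X v) ∧
  (∀ (a : A) (X : E) (u : F), σ (a • X) u = a • σ X u) ∧
  (∀ (a : A) (X : E) (u : F), σ X (a • u) = a • σ X u + θ X a • u) ∧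
  (∀ (X Y : E) (u : F), σ (brE X Y) u = σ X (σ Y u) - σ Y (σ X u)) ∧
  -- par is an A-linear Lie algebra morphism
  (∀ u v : F, par (u + v) = par u + par v) ∧
  (∀ (a : A) (u : F), par (a • u) = a • par u) ∧
  (∀ u v : F, par (brF u v) = brE (par u) (par v)) ∧
  -- crossed module axioms
  (∀ (X : E) (u : F), par (σ X u) = brE X (par u)) ∧
  (∀ u v : F, σ (par u) v = brF u v) ∧
  (∀ u : F, θ (par u) = 0) ∧
  -- σ(X) acts by derivations of the bracket of F
  (∀ (X : E) (u v : F), σ X (brF u v) = brF (σ X u) v + brF u (σ X v))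

/-!
The commutator of a left-symmetric product satisfies the Jacobi identity, which gives the
Lie structures on `E^c` and `𝓔^c`, and `ρ − μ` is a representation of `E^c` because the
mixed identity of `(ρ, μ)` makes the cross terms of `[ρ(X) − μ(X), ρ(Y) − μ(Y)]` collapse to
`−μ(X·Y) + μ(Y·X)`. For the derivation property, the crossed module axioms turn the
representation identities evaluated at `∂u` into formulas for `ρ(X)(u·v)` and `μ(X)(u·v)`.
-/

theorem map_sub_of_map_add {M N : Type*} [AddGroup M] [AddGroup N] (f : M → N)
    (hf : ∀ x y, f (x + y) = f x + f y) (x y : M) : f (x - y) = f x - f y :=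
  (AddMonoidHom.mk' f hf).map_sub x y

section PreLie

variable (K : Type*) {M : Type*} [Semiring K] [AddCommGroup M] [Module K M]

def IsPreLieAlg (mul : M → M → M) : Prop :=
  (∀ x y z : M, mul (x + y) z = mul x z + mul y z) ∧
  (∀ x y z : M, mul x (y + z) = mul x y + mul x z) ∧
  (∀ (k : K) (x y : M), mul (k • x) y = k • mul x y) ∧
  (∀ (k : K) (x y : M), mul x (k • y) = k • mul x y) ∧
  (∀ x y z : M, mul x (mul y z) - mul (mul x y) z = mul y (mul x z) - mul (mul y x) z)

def IsLieAlg (br : M → M → M) : Prop :=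
  (∀ x y z : M, br (x + y) z = br x z + br y z) ∧
  (∀ x y z : M, br x (y + z) = br x y + br x z) ∧
  (∀ (k : K) (x y : M), br (k • x) y = k • br x y) ∧
  (∀ (k : K) (x y : M), br x (k • y) = k • br x y) ∧
  (∀ x : M, br x x = 0) ∧
  (∀ x y z : M, br x (br y z) + br y (br z x) + br z (br x y) = 0)

variable {K}

theorem jacobi_commutator_of_leftSymmetric {mul : M → M → M}
    (hl : ∀ x y z : M, mul (x + y) z = mul x z + mul y z)
    (hr : ∀ x y z : M, mul x (y + z) = mul x y + mul x z)
    (hsymm : ∀ x y z : M,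
      mul x (mul y z) - mul (mul x y) z = mul y (mul x z) - mul (mul y x) z)
    (x y z : M) :
    let br := fun a b => mul a b - mul b a
    br x (br y z) + br y (br z x) + br z (br x y) = 0 := by
  have hl' := fun b c => map_sub_of_map_add (fun a => mul a c) (fun a a' => hl a a' c) b
  have hr' := fun a => map_sub_of_map_add (mul a) (hr a)
  simp only [hl', hr']
  rw [eq_add_of_sub_eq (hsymm x y z), eq_add_of_sub_eq (hsymm y z x),
    eq_add_of_sub_eq (hsymm z x y)]
  abel

theorem IsPreLieAlg.isLieAlg_commutator {mul : M → M → M} (h : IsPreLieAlg K mul) :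
    IsLieAlg K (fun x y => mul x y - mul y x) := by
  obtain ⟨hl, hr, hsl, hsr, hsymm⟩ := h
  refine ⟨fun x y z => ?_, fun x y z => ?_, fun k x y => ?_, fun k x y => ?_,
    fun x => sub_self _, jacobi_commutator_of_leftSymmetric hl hr hsymm⟩
  · simp only [hl, hr]; abel
  · simp only [hl, hr]; abel
  · simp only [hsl, hsr, smul_sub]
  · simp only [hsl, hsr, smul_sub]

end PreLie

section LieRinehart

variable (K : Type*) {A E F : Type*} [Field K] [CommRing A] [Algebra K A]
  [AddCommGroup E] [Module K E] [Module A E] [IsScalarTower K A E]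
  [AddCommGroup F] [Module K F] [Module A F] [IsScalarTower K A F]

def IsLRRep (br : E → E → E) (θ : E → Derivation K A A) (σ : E → F → F) : Prop :=
  (∀ (X Y : E) (u : F), σ (X + Y) u = σ X u + σ Y u) ∧
  (∀ (X : E) (u v : F), σ X (u + v) = σ X u + σ X v) ∧
  (∀ (a : A) (X : E) (u : F), σ (a • X) u = a • σ X u) ∧
  (∀ (a : A) (X : E) (u : F), σ X (a • u) = a • σ X u + θ X a • u) ∧
  (∀ (X Y : E) (u : F), σ (br X Y) u = σ X (σ Y u) - σ Y (σ X u))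

variable {K}

theorem IsPreLieRinehart.isLieRinehart_commutator {mul : E → E → E}
    {θ : E → Derivation K A A} (h : IsPreLieRinehart K mul θ) :
    IsLieRinehart K (fun X Y => mul X Y - mul Y X) θ := by
  obtain ⟨hl, hr, hsl, hsr, hsymm, hleib, hAl, hθadd, hθA, hθbr⟩ := h
  obtain ⟨b1, b2, b3, b4, b5, b6⟩ :=
    IsPreLieAlg.isLieAlg_commutator (K := K) ⟨hl, hr, hsl, hsr, hsymm⟩
  refine ⟨b1, b2, b3, b4, b5, b6, fun a X Y => ?_, hθadd, hθA, hθbr⟩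
  beta_reduce
  rw [hleib, hAl, smul_sub]
  abel

theorem IsPLRRep.isLRRep_sub {mul : E → E → E} {θ : E → Derivation K A A}
    {ρ μ : E → F → F} (h : IsPLRRep K mul θ ρ μ) :
    IsLRRep K (fun X Y => mul X Y - mul Y X) θ (fun X u => ρ X u - μ X u) := by
  obtain ⟨r1, r2, r3, r4, r5, m1, m2, m3, m4, rm⟩ := h
  refine ⟨fun X Y u => ?_, fun X u v => ?_, fun a X u => ?_, fun a X u => ?_,
    fun X Y u => ?_⟩
  · simp only [r1, m1]; abel
  · simp only [r2, m2]; abel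
  · simp only [r3, m3, smul_sub]
  · simp only [r4, m4, smul_sub]; abel
  · have hμ := map_sub_of_map_add (fun Z => μ Z u) (fun Z W => m1 Z W u)
    have hρ := fun X => map_sub_of_map_add (ρ X) (r2 X)
    have hμ' := fun X => map_sub_of_map_add (μ X) (m2 X)
    simp only [hμ, hρ, hμ', r5]
    rw [eq_add_of_sub_eq (rm X Y u), eq_add_of_sub_eq (rm Y X u)]
    abel

namespace IsPLRCrossedModule

variable {mulE : E → E → E} {θ : E → Derivation K A A} {mulF : F → F → F} {par : F → E}
  {ρ μ : E → F → F}

theorem rho_mul (hcm : IsPLRCrossedModule K mulE θ mulF par ρ μ) (X : E) (u v : F) :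
    ρ X (mulF u v) = mulF (ρ X u) v - mulF (μ X u) v + mulF u (ρ X v) := by
  obtain ⟨-, -, -, -, -, -, ⟨r1, -, -, -, r5, -⟩, -, -, -, q1, q2, q3, -⟩ := hcm
  have h := r5 X (par u) v
  rw [map_sub_of_map_add (fun Z => ρ Z v) (fun Z W => r1 Z W v), ← q1 X u, ← q2 X u] at h
  simp only [q3] at h
  exact eq_add_of_sub_eq h.symm

theorem mu_mul (hcm : IsPLRCrossedModule K mulE θ mulF par ρ μ) (X : E) (u v : F) :
    μ X (mulF u v) = mulF u (μ X v) - mulF v (μ X u) + μ X (mulF v u) := by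
  obtain ⟨-, -, -, -, -, -, ⟨-, -, -, -, -, -, -, -, -, rm⟩, -, -, -, -, q2, q3, q4, -⟩ := hcm
  have h := rm (par u) X v
  rw [← q2 X u] at h
  simp only [q3, q4] at h
  rw [sub_add, ← h, sub_sub_cancel]

theorem sub_apply_commutator (hcm : IsPLRCrossedModule K mulE θ mulF par ρ μ)
    (X : E) (u v : F) :
    let br := fun u v => mulF u v - mulF v u
    ρ X (br u v) - μ X (br u v)
      = br (ρ X u - μ X u) v + br u (ρ X v - μ X v) := by
  have hρ := hcm.rho_mul X
  have hμ := hcm.mu_mul X u v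
  obtain ⟨-, f1, f2, -, -, -, ⟨-, r2, -, -, -, -, m2, -⟩, -⟩ := hcm
  have hl := fun w x => map_sub_of_map_add (fun z => mulF z x) (fun a b => f1 a b x) w
  have hr := fun w => map_sub_of_map_add (mulF w) (f2 w)
  simp only [hl, hr, map_sub_of_map_add (ρ X) (r2 X), map_sub_of_map_add (μ X) (m2 X)]
  rw [hρ u v, hρ v u, hμ]
  abel

end IsPLRCrossedModule

end LieRinehart

/-- a crossed module `(E, F, par, (ρ,μ))` for pre-Lie-Rinehart
algebras yields a crossed module `(E^c, F^c, par, ρ − μ)` for Lie-Rinehart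
algebras, where the sub-adjacent brackets are the commutators of the pre-Lie
products. -/
theorem crossedModule_subAdjacent {K A E F : Type*} [Field K] [CommRing A]
    [Algebra K A]
    [AddCommGroup E] [Module K E] [Module A E] [IsScalarTower K A E]
    [AddCommGroup F] [Module K F] [Module A F] [IsScalarTower K A F]
    (mulE : E → E → E) (θ : E → Derivation K A A)
    (mulF : F → F → F) (par : F → E) (ρ μ : E → F → F)
    (hcm : IsPLRCrossedModule K mulE θ mulF par ρ μ) :
    IsLRCrossedModule K
      (fun X Y => mulE X Y - mulE Y X) θ
      (fun u v => mulF u v - mulF v u) par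
      (fun X u => ρ X u - μ X u) := by
  have hder := hcm.sub_apply_commutator
  obtain ⟨hE, f1, f2, f3, f4, f5, hrep, p1, p2, p3, q1, q2, q3, q4, q5⟩ := hcm
  obtain ⟨b1, b2, b3, b4, b5, b6⟩ :=
    IsPreLieAlg.isLieAlg_commutator (K := K) ⟨f1, f2, f3, f4, f5⟩
  obtain ⟨s1, s2, s3, s4, s5⟩ := hrep.isLRRep_sub
  have hpar := map_sub_of_map_add par p1
  refine ⟨hE.isLieRinehart_commutator, b1, b2, b3, b4, b5, b6, s1, s2, s3, s4, s5, p1, p2,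
    fun u v => ?_, fun X u => ?_, fun u v => ?_, q5, hder⟩
  · rw [hpar, p3, p3]
  · rw [hpar, q1, q2]
  · beta_reduce
    rw [q3, q4]
end

section
/- Let Dₙ = {∂₁,…,∂ₙ} be pairwise commuting derivations of a commutative K-algebra A, and let ADₙ = {Σᵢ aᵢ∂ᵢ : aᵢ ∈ A}. Then the operation (a∂ᵢ)·(b∂ⱼ) = a∂ᵢ(b)∂ⱼ together with the inclusion ADₙ → Der(A) as anchor makes ADₙ a pre-Lie-Rinehart algebra over A. -/
/-! Writing `θ` for the anchor, the product is `X · Y = (θ X (Y j))ⱼ`: the anchor of `X`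
differentiates every coefficient of `Y`. All axioms but the pre-Lie identity and the bracket
condition are then linearity of `θ` and the Leibniz rule for `θ X`. For the other two, expanding
`θ X (θ Y a) = θ (X · Y) a + ∑ᵢ ∑ₘ Xᵢ Yₘ ∂ᵢ (∂ₘ a)` shows that `θ X ∘ θ Y - θ (X · Y)` is
symmetric in `X` and `Y` because the `∂ᵢ` commute, and each of the two identities is exactly
this symmetry. -/

open Finset

section PointwiseAction

variable {K A ι : Type*} [Field K] [CommRing A] [Algebra K A]

theorem isPreLieRinehart_pi_of_associator_symm (θ : (ι → A) →ₗ[A] Derivation K A A)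
    (hsymm : ∀ X Y a, θ X (θ Y a) - θ (fun j => θ X (Y j)) a
      = θ Y (θ X a) - θ (fun j => θ Y (X j)) a) :
    IsPreLieRinehart K (fun X Y j => θ X (Y j)) θ := by
  refine ⟨?_, ?_, ?_, ?_, ?_, ?_, ?_, ?_, ?_, ?_⟩
  · intro X Y Z
    funext j
    simp only [map_add, Derivation.add_apply, Pi.add_apply]
  · intro X Y Z
    funext j
    simp only [Pi.add_apply, map_add]
  · intro k X Y
    funext j
    simp only [LinearMap.map_smul_of_tower, Derivation.smul_apply, Pi.smul_apply]
  · intro k X Y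
    funext j
    simp only [Pi.smul_apply, Derivation.map_smul]
  · intro X Y Z
    funext j
    exact hsymm X Y (Z j)
  · intro a X Y
    funext j
    simp only [Pi.smul_apply, Pi.add_apply, smul_eq_mul, Derivation.leibniz]
    ring
  · intro a X Y
    funext j
    simp only [map_smul, Derivation.smul_apply, Pi.smul_apply]
  · exact map_add θ
  · exact map_smul θ
  · intro X Y
    ext a
    simp only [map_sub, Derivation.coe_sub, Pi.sub_apply, Derivation.commutator_apply]
    linear_combination -hsymm X Y a

end PointwiseAction

section LinearCombination

variable {K A ι : Type*} [CommRing K] [CommRing A] [Algebra K A] [Fintype ι]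
  (d : ι → Derivation K A A)

theorem Fintype.linearCombination_derivation_apply (c : ι → A) (a : A) :
    Fintype.linearCombination A d c a = ∑ i, c i * d i a := by
  rw [Fintype.linearCombination_apply, ← Derivation.coeFnAddMonoidHom_apply, map_sum,
    Finset.sum_apply]
  rfl

theorem Fintype.linearCombination_derivation_apply_apply (X Y : ι → A) (a : A) :
    Fintype.linearCombination A d X (Fintype.linearCombination A d Y a)
      = Fintype.linearCombination A d (fun m => Fintype.linearCombination A d X (Y m)) a
        + ∑ i, ∑ m, X i * Y m * d i (d m a) := by
  simp only [Fintype.linearCombination_derivation_apply, map_sum, Derivation.leibniz,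
    smul_eq_mul, Finset.sum_add_distrib, Finset.mul_sum, Finset.sum_mul]
  rw [add_comm, Finset.sum_comm (f := fun m i => Y m * (X i * d i (d m a)))]
  congr 1 <;> exact Finset.sum_congr rfl fun _ _ => Finset.sum_congr rfl fun _ _ => by ring

theorem sum_sum_mul_mul_apply_apply_comm (hcomm : ∀ i j, ⁅d i, d j⁆ = 0) (X Y : ι → A) (a : A) :
    ∑ i, ∑ m, X i * Y m * d i (d m a) = ∑ i, ∑ m, Y i * X m * d i (d m a) := by
  rw [Finset.sum_comm]
  refine Finset.sum_congr rfl fun i _ => Finset.sum_congr rfl fun m _ => ?_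
  have hswap : d m (d i a) = d i (d m a) := by
    simpa [Derivation.commutator_apply, sub_eq_zero] using congr($(hcomm m i) a)
  rw [hswap]
  ring

end LinearCombination

/-- `A·Dₙ` is modelled by the coefficient tuples `Fin n → A`, i.e. the `∂ᵢ` are treated as
`A`-linearly independent. -/
theorem commutingDerivations_isPreLieRinehart {K A : Type*} [Field K] [CommRing A]
    [Algebra K A] (n : ℕ) (d : Fin n → Derivation K A A)
    (hcomm : ∀ i j, ⁅d i, d j⁆ = 0) :
    IsPreLieRinehart K
      (fun c e : Fin n → A => fun j => ∑ i, c i * (d i) (e j))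
      (fun c : Fin n → A => ∑ i, c i • d i) := by
  have hmul : (fun c e : Fin n → A => fun j => ∑ i, c i * (d i) (e j))
      = fun X Y j => Fintype.linearCombination A d X (Y j) := by
    simp only [Fintype.linearCombination_derivation_apply]
  rw [hmul]
  refine isPreLieRinehart_pi_of_associator_symm _ fun X Y a => ?_
  rw [Fintype.linearCombination_derivation_apply_apply,
    Fintype.linearCombination_derivation_apply_apply,
    sum_sum_mul_mul_apply_apply_comm d hcomm X Y, add_sub_cancel_left, add_sub_cancel_left]
end

section
/- Let A be a commutative associative K-algebra with a derivation ∂. Then the product x∗y = x·(∂y) makes A a pre-Lie algebra, and together with the anchor θ(x)(y) = x·(∂y), the triple (A, ∗, θ) is a pre-Lie-Rinehart algebra over A. -/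
namespace Derivation

variable {R A : Type*} [CommRing R] [CommRing A] [Algebra R A] (D : Derivation R A A)

theorem mul_apply_mul_apply_sub_mul_apply_mul_apply (x y z : A) :
    x * D (y * D z) - x * D y * D z = x * y * D (D z) := by
  rw [leibniz, smul_eq_mul, smul_eq_mul]
  ring

theorem lie_smul_smul_s19 (x y : A) : ⁅x • D, y • D⁆ = (x * D y - y * D x) • D := by
  ext a
  simp only [commutator_apply, smul_apply, leibniz, smul_eq_mul]
  ring

end Derivation

/-- for a commutative associative `K`-algebra `A` with a derivation
`D`, the product `x∗y = x·D(y)` together with the anchor `θ(x) = x • D` (so that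
`θ(x)(y) = x·D(y)`) makes `(A, ∗, θ)` a pre-Lie-Rinehart algebra over `A`;
in particular `∗` is a pre-Lie product on `A`. -/
theorem derivation_mul_isPreLieRinehart {K A : Type*} [Field K] [CommRing A]
    [Algebra K A] (D : Derivation K A A) :
    IsPreLieRinehart K
      (fun x y : A => x * D y)
      (fun x : A => x • D) := by
  refine ⟨fun X Y Z => add_mul X Y (D Z), fun X Y Z => by simp only [map_add, mul_add],
    fun k X Y => smul_mul_assoc k X (D Y), fun k X Y => by simp only [D.map_smul, mul_smul_comm],
    fun X Y Z => ?_, fun a X Y => ?_, fun a X Y => smul_mul_assoc a X (D Y),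
    fun X Y => add_smul X Y D, fun a X => (smul_smul a X D).symm, fun X Y => ?_⟩
  · simp only [D.mul_apply_mul_apply_sub_mul_apply_mul_apply, mul_comm X Y]
  · simp only [Derivation.leibniz, Derivation.smul_apply, smul_eq_mul]
    ring
  · exact (D.lie_smul_smul_s19 X Y).symm
end
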